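/- arXiv:1711.02045 — 2 statements merged into one kernel-verified Lean document; each statement's English description precedes it below -/
import Mathlib

section
/- Suppose {A_i} is a sequence of subsets of ℝ^n such that A ⊆ A_i for all i, converging to the closed set A in the Hausdorff sense with respect to compact subsets. If each complement ℝ^n ∖ A_i is globally k-convex, then ℝ^n ∖ A is also globally k-convex. -/
open CategoryTheory

/-- The singular chain complex of a topological space. -/
noncomputable def singularChains : TopCat.{0} ⥤ ChainComplex AddCommGrpCat.{0} ℕ :=
  TopCat.toSSet ⋙ (CategoryTheory.SimplicialObject.whiskering _ _).obj AddCommGrpCat.free ⋙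
    AlgebraicTopology.alternatingFaceMapComplex AddCommGrpCat

/-- Singular homology in degree `q`, as a functor. -/
noncomputable def singularHomology (q : ℕ) : TopCat.{0} ⥤ AddCommGrpCat.{0} :=
  singularChains ⋙ HomologicalComplex.homologyFunctor _ _ q

/-- The map to the one-point space. -/
def toPt (X : TopCat.{0}) : X ⟶ TopCat.of PUnit :=
  TopCat.ofHom ⟨fun _ => PUnit.unit, continuous_const⟩

/-- `f : X ⟶ Y` induces an injective map on *reduced* singular homology in degree `q`.
(Reduced homology is identified with the kernel of the map induced by `X → pt`.) -/
def ReducedHomologyMapInjective (q : ℕ) {X Y : TopCat.{0}} (f : X ⟶ Y) : Prop :=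
  ∀ a : (singularHomology q).obj X,
    (singularHomology q).map (toPt X) a = 0 →
    (singularHomology q).map f a = 0 → a = 0

/-- The inclusion of a subset into a larger subset, as a morphism of `TopCat`. -/
noncomputable def inclTop {n : ℕ} (s t : Set (EuclideanSpace ℝ (Fin n))) (h : s ⊆ t) :
    TopCat.of s ⟶ TopCat.of t :=
  TopCat.ofHom ⟨Set.inclusion h, continuous_inclusion h⟩

/-- `X ⊆ ℝⁿ` is globally `k`-convex if for every affine `k`-plane `L ⊆ ℝⁿ` the
inclusion-induced map on reduced singular homology `H̃_{k-1}(L ∩ X) → H̃_{k-1}(X)`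
is injective. -/
def GloballyConvex (n k : ℕ) (X : Set (EuclideanSpace ℝ (Fin n))) : Prop :=
  ∀ L : AffineSubspace ℝ (EuclideanSpace ℝ (Fin n)),
    (L : Set (EuclideanSpace ℝ (Fin n))).Nonempty →
    Module.finrank ℝ L.direction = k →
    ReducedHomologyMapInjective (k - 1)
      (inclTop (↑L ∩ X) X Set.inter_subset_right)

/-- A sequence of sets `A i ⊆ ℝⁿ` converges to `B ⊆ ℝⁿ` in the Hausdorff sense with
respect to compact subsets: for every compact `K`, the Hausdorff distance between
`A i ∩ K` and `B ∩ K` tends to `0` (in the extended sense, so that it is `0` when both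
sets are empty). -/
def HausdorffConvergesTo {n : ℕ} (A : ℕ → Set (EuclideanSpace ℝ (Fin n)))
    (B : Set (EuclideanSpace ℝ (Fin n))) : Prop :=
  ∀ K : Set (EuclideanSpace ℝ (Fin n)), IsCompact K →
    Filter.Tendsto (fun i => Metric.hausdorffEDist (A i ∩ K) (B ∩ K))
      Filter.atTop (nhds 0)

/-! A reduced class of `H_{k-1}(L ∖ A₀)` that dies in `ℝⁿ ∖ A₀` is represented by a cycle
bounding a chain in `ℝⁿ ∖ A₀`; together they are supported on a compact set `K` disjoint from
`A₀`. Hausdorff convergence on `K` forces `A i ∩ K = ∅` for large `i` (the Hausdorff distance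
from a nonempty set to `∅` is infinite), so since `A₀ ⊆ A i` the cycle and the chain lift to
`L ∖ A i` and `ℝⁿ ∖ A i`. The lifted class is reduced and dies in `ℝⁿ ∖ A i`, hence vanishes by
global `k`-convexity of `ℝⁿ ∖ A i`, and so does its image, the original class. -/

universe u

namespace ChainComplex

variable {C D D' : ChainComplex AddCommGrpCat.{u} ℕ} (q : ℕ)

theorem exists_iCycles_eq {x : C.X q} (hx : ∀ j, C.d q j x = 0) :
    ∃ z : C.cycles q, C.iCycles q z = x :=
  ⟨(C.sc q).abCyclesIso.inv ⟨x, hx _⟩, (C.sc q).abCyclesIso_inv_apply_iCycles _⟩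

theorem homologyπ_eq_zero_iff (z : C.cycles q) :
    C.homologyπ q z = 0 ↔ ∃ c : C.X (q + 1), C.d (q + 1) q c = C.iCycles q z := by
  have hexact := (ShortComplex.mk (C.toCycles (q + 1) q) (C.homologyπ q)
      (C.toCycles_comp_homologyπ (q + 1) q)).ab_exact_iff.1
    (ShortComplex.exact_of_g_is_cokernel _ (C.homologyIsCokernel (q + 1) q (by simp)))
  constructor
  · intro hz
    obtain ⟨c, hc⟩ := hexact z hz
    exact ⟨c, by rw [← hc, ← ConcreteCategory.comp_apply, C.toCycles_i]⟩
  · rintro ⟨c, hc⟩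
    have hcz : C.toCycles (q + 1) q c = z :=
      (AddCommGrpCat.mono_iff_injective _).1 inferInstance
        (by rw [← ConcreteCategory.comp_apply, C.toCycles_i, hc])
    rw [← hcz, ← ConcreteCategory.comp_apply, C.toCycles_comp_homologyπ]
    rfl

theorem homologyMap_homologyπ_eq_zero_iff (φ : C ⟶ D) (z : C.cycles q) :
    HomologicalComplex.homologyMap φ q (C.homologyπ q z) = 0 ↔
      ∃ c : D.X (q + 1), D.d (q + 1) q c = φ.f q (C.iCycles q z) := by
  rw [← ConcreteCategory.comp_apply, HomologicalComplex.homologyπ_naturality,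
    ConcreteCategory.comp_apply, homologyπ_eq_zero_iff, ← ConcreteCategory.comp_apply,
    HomologicalComplex.cyclesMap_i, ConcreteCategory.comp_apply]

theorem homologyMap_homologyπ_eq_zero_of_injective {φ : C ⟶ D} {v : D ⟶ D'}
    (hv : Function.Injective (v.f q)) (z : C.cycles q) (c : D.X (q + 1))
    (hc : D'.d (q + 1) q (v.f (q + 1) c) = (φ ≫ v).f q (C.iCycles q z)) :
    HomologicalComplex.homologyMap φ q (C.homologyπ q z) = 0 := by
  refine (homologyMap_homologyπ_eq_zero_iff q φ z).2 ⟨c, hv ?_⟩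
  rw [← ConcreteCategory.comp_apply, ← HomologicalComplex.Hom.comm, ConcreteCategory.comp_apply,
    hc, HomologicalComplex.comp_f, ConcreteCategory.comp_apply]

theorem exists_cyclesMap_eq {u : C ⟶ D} (hu : ∀ i, Function.Injective (u.f i))
    (z : D.cycles q) {x : C.X q} (hx : u.f q x = D.iCycles q z) :
    ∃ w : C.cycles q, C.iCycles q w = x ∧ HomologicalComplex.cyclesMap u q w = z := by
  have hdx (j : ℕ) : C.d q j x = 0 := hu j <| by
    rw [← ConcreteCategory.comp_apply, ← u.comm, ConcreteCategory.comp_apply, hx,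
      ← ConcreteCategory.comp_apply, HomologicalComplex.iCycles_d, map_zero]
    rfl
  obtain ⟨w, hw⟩ := exists_iCycles_eq q hdx
  refine ⟨w, hw, (AddCommGrpCat.mono_iff_injective (D.iCycles q)).1 inferInstance ?_⟩
  rw [← ConcreteCategory.comp_apply, HomologicalComplex.cyclesMap_i, ConcreteCategory.comp_apply,
    hw, hx]

end ChainComplex

theorem FreeAbelianGroup.mem_range_map_of_support_subset {α β : Type*} {f : α → β}
    {x : FreeAbelianGroup β} (hx : (x.support : Set β) ⊆ Set.range f) :
    x ∈ (FreeAbelianGroup.map f).range := by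
  rw [x.eq_sum_support_coeff_smul_of]
  refine AddSubgroup.sum_mem _ fun b hb => AddSubgroup.zsmul_mem _ ?_ _
  obtain ⟨a, rfl⟩ := hx hb
  exact ⟨.of a, FreeAbelianGroup.map_of_apply a⟩

instance SimplexCategory.compactSpace_toTop_obj (x : SimplexCategory) :
    CompactSpace (SimplexCategory.toTop.obj x) :=
  inferInstanceAs (CompactSpace (ULift (stdSimplex ℝ (Fin (x.len + 1)))))

abbrev SingularSimplex (q : ℕ) (X : TopCat.{0}) : Type :=
  ULift.{0} (SimplexCategory.toTop.obj (SimplexCategory.mk q) ⟶ X)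

def singularChainSupport {X : TopCat.{0}} {q : ℕ} (x : (singularChains.obj X).X q) : Set X :=
  ⋃ σ ∈ FreeAbelianGroup.support (X := SingularSimplex q X) x, Set.range σ.down

theorem isCompact_singularChainSupport {X : TopCat.{0}} {q : ℕ}
    (x : (singularChains.obj X).X q) : IsCompact (singularChainSupport x) :=
  (Finset.finite_toSet _).isCompact_biUnion fun σ _ => isCompact_range σ.down.hom.continuous

theorem singularChains_map_f_injective {X Y : TopCat.{0}} {f : X ⟶ Y}
    (hf : Function.Injective f) (q : ℕ) : Function.Injective ((singularChains.map f).f q) := by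
  have : Mono ((TopCat.toSSet.map f).app (Opposite.op (SimplexCategory.mk q))) :=
    (mono_iff_injective _).2 fun σ τ h => ULift.ext _ _ <| TopCat.hom_ext <|
      ContinuousMap.ext fun p => hf <| congrArg (fun ρ : SingularSimplex q Y => ρ.down p) h
  exact (AddCommGrpCat.mono_iff_injective _).1 (AddCommGrpCat.free.map_mono _)

section Subspaces

variable {E : Type} [TopologicalSpace E]

noncomputable def TopCat.ofSubsetInclusion {s t : Set E} (h : s ⊆ t) :
    TopCat.of s ⟶ TopCat.of t :=
  TopCat.ofHom ⟨Set.inclusion h, continuous_inclusion h⟩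

theorem TopCat.ofSubsetInclusion_injective {s t : Set E} (h : s ⊆ t) :
    Function.Injective (TopCat.ofSubsetInclusion h) :=
  Set.inclusion_injective h

theorem exists_singularChains_map_ofSubsetInclusion_eq {s t : Set E} (h : s ⊆ t) {q : ℕ}
    (x : (singularChains.obj (TopCat.of t)).X q)
    (hx : Subtype.val '' singularChainSupport x ⊆ s) :
    ∃ x', (singularChains.map (TopCat.ofSubsetInclusion h)).f q x' = x := by
  refine FreeAbelianGroup.mem_range_map_of_support_subset fun (σ : SingularSimplex q _) hσ => ?_
  refine ⟨ULift.up (TopCat.ofHom ⟨fun p => ⟨σ.down p, hx ⟨σ.down p, ?_, rfl⟩⟩, ?_⟩), rfl⟩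
  · exact Set.mem_biUnion hσ ⟨p, rfl⟩
  · exact (continuous_subtype_val.comp σ.down.hom.continuous).subtype_mk _

theorem reducedHomologyMapInjective_of_forall_isCompact {S X : Set E} (hSX : S ⊆ X) (q : ℕ)
    (h : ∀ K ⊆ X, IsCompact K → ∃ (S' X' : Set E) (hS'X' : S' ⊆ X'), S' ⊆ S ∧ X' ⊆ X ∧
      K ∩ S ⊆ S' ∧ K ⊆ X' ∧ ReducedHomologyMapInjective q (TopCat.ofSubsetInclusion hS'X')) :
    ReducedHomologyMapInjective q (TopCat.ofSubsetInclusion hSX) := by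
  intro a ha hja
  obtain ⟨z, rfl⟩ := (AddCommGrpCat.epi_iff_surjective
    ((singularChains.obj (TopCat.of S)).homologyπ q)).1 inferInstance a
  obtain ⟨c, hc⟩ := (ChainComplex.homologyMap_homologyπ_eq_zero_iff q _ z).1 hja
  set Z := (singularChains.obj (TopCat.of S)).iCycles q z
  obtain ⟨S', X', hS'X', hS', hX', hKS, hKX, hinj⟩ :=
    h (Subtype.val '' singularChainSupport Z ∪ Subtype.val '' singularChainSupport c)
      (Set.union_subset ((Subtype.coe_image_subset _ _).trans hSX) (Subtype.coe_image_subset _ _))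
      (((isCompact_singularChainSupport Z).image continuous_subtype_val).union
        ((isCompact_singularChainSupport c).image continuous_subtype_val))
  obtain ⟨z', hz'⟩ := exists_singularChains_map_ofSubsetInclusion_eq hS' Z fun p hp =>
    hKS ⟨Set.subset_union_left hp, Subtype.coe_image_subset _ _ hp⟩
  obtain ⟨c', hc'⟩ := exists_singularChains_map_ofSubsetInclusion_eq hX' c
    (Set.subset_union_right.trans hKX)
  obtain ⟨w, hw, hwz⟩ := ChainComplex.exists_cyclesMap_eq q
    (singularChains_map_f_injective (TopCat.ofSubsetInclusion_injective hS')) z hz'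
  have hw_u : (singularHomology q).map (TopCat.ofSubsetInclusion hS')
      ((singularChains.obj (TopCat.of S')).homologyπ q w) =
        (singularChains.obj (TopCat.of S)).homologyπ q z := by
    rw [← hwz, ← ConcreteCategory.comp_apply, ← HomologicalComplex.homologyπ_naturality]
    rfl
  have hw_red : (singularHomology q).map (toPt (TopCat.of S'))
      ((singularChains.obj (TopCat.of S')).homologyπ q w) = 0 := by
    rw [show toPt (TopCat.of S') = TopCat.ofSubsetInclusion hS' ≫ toPt _ from rfl,
      Functor.map_comp]
    exact (congrArg ((singularHomology q).map (toPt (TopCat.of S))) hw_u).trans ha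
  have hw_bdry : (singularHomology q).map (TopCat.ofSubsetInclusion hS'X')
      ((singularChains.obj (TopCat.of S')).homologyπ q w) = 0 := by
    refine ChainComplex.homologyMap_homologyπ_eq_zero_of_injective q
      (singularChains_map_f_injective (TopCat.ofSubsetInclusion_injective hX') q) w c' ?_
    have hsquare : TopCat.ofSubsetInclusion hS'X' ≫ TopCat.ofSubsetInclusion hX' =
        TopCat.ofSubsetInclusion hS' ≫ TopCat.ofSubsetInclusion hSX := rfl
    rw [hc', hc, ← hz', hw, ← Functor.map_comp, hsquare, Functor.map_comp,
      HomologicalComplex.comp_f, ConcreteCategory.comp_apply]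
  rw [← hw_u, hinj _ hw_red hw_bdry, map_zero]

end Subspaces

theorem HausdorffConvergesTo.eventually_disjoint {n : ℕ}
    {A : ℕ → Set (EuclideanSpace ℝ (Fin n))} {B K : Set (EuclideanSpace ℝ (Fin n))}
    (hA : HausdorffConvergesTo A B) (hK : IsCompact K) (hBK : Disjoint B K) :
    ∀ᶠ i in Filter.atTop, Disjoint (A i) K := by
  have h := hA K hK
  rw [hBK.inter_eq] at h
  filter_upwards [h.eventually_lt_const ENNReal.zero_lt_top] with i hi
  rw [Set.disjoint_iff_inter_eq_empty]
  by_contra hne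
  exact hi.ne (Metric.hausdorffEDist_empty (Set.nonempty_iff_ne_empty.2 hne))

theorem globallyConvex_of_hausdorff_limit_general
    (n k : ℕ) (A : ℕ → Set (EuclideanSpace ℝ (Fin n)))
    (A₀ : Set (EuclideanSpace ℝ (Fin n)))
    (hsub : ∀ i, A₀ ⊆ A i) (hconv : HausdorffConvergesTo A A₀)
    (hconvex : ∀ i, GloballyConvex n k (A i)ᶜ) :
    GloballyConvex n k A₀ᶜ := by
  intro L hL hdim
  refine reducedHomologyMapInjective_of_forall_isCompact _ _ fun K hKA₀ hK => ?_
  obtain ⟨i, hi⟩ :=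
    (hconv.eventually_disjoint hK (Set.subset_compl_iff_disjoint_right.1 hKA₀).symm).exists
  have hKAi : K ⊆ (A i)ᶜ := hi.subset_compl_left
  have hAi : (A i)ᶜ ⊆ A₀ᶜ := Set.compl_subset_compl.2 (hsub i)
  exact ⟨_, _, Set.inter_subset_right, Set.inter_subset_inter_right _ hAi, hAi,
    fun x ⟨hxK, hxL, _⟩ => ⟨hxL, hKAi hxK⟩, hKAi, hconvex i L hL hdim⟩

/-- If `A ⊆ A i` for all `i`, the sets `A i` converge to the closed set `A` in the
Hausdorff sense with respect to compact subsets, and every complement `ℝⁿ ∖ A i` is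
globally `k`-convex, then `ℝⁿ ∖ A` is globally `k`-convex. -/
theorem globallyConvex_of_hausdorff_limit
    (n k : ℕ) (A : ℕ → Set (EuclideanSpace ℝ (Fin n)))
    (A₀ : Set (EuclideanSpace ℝ (Fin n))) (hA₀ : IsClosed A₀)
    (hsub : ∀ i, A₀ ⊆ A i) (hconv : HausdorffConvergesTo A A₀)
    (hconvex : ∀ i, GloballyConvex n k (A i)ᶜ) :
    GloballyConvex n k A₀ᶜ :=
  globallyConvex_of_hausdorff_limit_general n k A A₀ hsub hconv hconvex
end

section
/- Let F ⊆ ℝ^n be a closed set and m ≥ 1 an integer. If the complement ℝ^n ∖ F is not globally q-convex, then the complement ℝ^{m+n} ∖ (ℝ^m × F) is not globally q-convex, where ℝ^m × F = {(y, x) ∈ ℝ^m × ℝ^n : x ∈ F}. -/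
open CategoryTheory

/-- The product `ℝᵐ × S ⊆ ℝ^{m+n}` of `ℝᵐ` with a set `S ⊆ ℝⁿ` (the first `m`
coordinates are free, the last `n` coordinates lie in `S`). -/
def prodRm (m n : ℕ) (S : Set (EuclideanSpace ℝ (Fin n))) :
    Set (EuclideanSpace ℝ (Fin (m + n))) :=
  {x | (WithLp.toLp 2 (fun j => x (Fin.natAdd m j)) : EuclideanSpace ℝ (Fin n)) ∈ S}

/-!
The projection `p : ℝ^{m+n} → ℝⁿ` forgetting the first `m` coordinates is a linear surjection
with `(ℝᵐ × F)ᶜ = p⁻¹(Fᶜ)`. A linear section `e` of `p` carries an affine `q`-plane `L ⊆ ℝⁿ` to the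
affine `q`-plane `e(L)`, and `e(L) ∩ p⁻¹(Fᶜ)` retracts onto `L ∩ Fᶜ` via `p`. A reduced class of
`L ∩ Fᶜ` that dies in `Fᶜ` is pushed by `e` to a reduced class of `e(L) ∩ p⁻¹(Fᶜ)` that dies in
`p⁻¹(Fᶜ)`; global convexity there kills it, and applying `p` shows the original class was zero.
-/

open Set

theorem ReducedHomologyMapInjective.of_retract {q : ℕ} {A X A' X' : TopCat.{0}}
    {f : A ⟶ X} {f' : A' ⟶ X'} (j : A ⟶ A') (r : A' ⟶ A) (ι : X ⟶ X')
    (hjr : j ≫ r = 𝟙 A) (hw : j ≫ f' = f ≫ ι) (hf' : ReducedHomologyMapInjective q f') :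
    ReducedHomologyMapInjective q f := by
  intro a hpt hfa
  let H := singularHomology q
  have hj : H.map j a = 0 := by
    refine hf' _ ?_ ?_
    · -- `j ≫ toPt A' = toPt A` holds definitionally
      rw [← ConcreteCategory.comp_apply, ← H.map_comp]
      exact hpt
    · rw [← ConcreteCategory.comp_apply, ← H.map_comp, hw, H.map_comp,
        ConcreteCategory.comp_apply, hfa, map_zero]
  calc a = H.map r (H.map j a) := by
        rw [← ConcreteCategory.comp_apply, ← H.map_comp, hjr, H.map_id]; rfl
    _ = 0 := by rw [hj, map_zero]

noncomputable def mapsToHom {n n' : ℕ}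
    (f : EuclideanSpace ℝ (Fin n) →ₗ[ℝ] EuclideanSpace ℝ (Fin n')) {s : Set (EuclideanSpace ℝ (Fin n))} {t : Set (EuclideanSpace ℝ (Fin n'))} (h : MapsTo f s t) :
    TopCat.of s ⟶ TopCat.of t :=
  TopCat.ofHom ⟨h.restrict f s t, f.continuous_of_finiteDimensional.restrict h⟩

theorem GloballyConvex.of_preimage {n n' k : ℕ} {X : Set (EuclideanSpace ℝ (Fin n))}
    (p : EuclideanSpace ℝ (Fin n') →ₗ[ℝ] EuclideanSpace ℝ (Fin n)) (hp : Function.Surjective p)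
    (h : GloballyConvex n' k (p ⁻¹' X)) : GloballyConvex n k X := by
  obtain ⟨e, hpe⟩ := p.exists_rightInverse_of_surjective (LinearMap.range_eq_top.2 hp)
  have hpe' : ∀ x, p (e x) = x := LinearMap.congr_fun hpe
  have he : Function.Injective e := Function.LeftInverse.injective hpe'
  intro L ⟨x, hx⟩ hdim
  let L' := L.map e.toAffineMap
  have hL' : (L' : Set _).Nonempty := ⟨e x, AffineSubspace.mem_map.2 ⟨x, hx, rfl⟩⟩
  have hdim' : Module.finrank ℝ L'.direction = k := by
    rw [AffineSubspace.map_direction, LinearMap.toAffineMap_linear, ← hdim]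
    exact (Submodule.equivMapOfInjective e he L.direction).finrank_eq.symm
  have hj : MapsTo e (L ∩ X) (L' ∩ p ⁻¹' X) := fun y ⟨hyL, hyX⟩ =>
    ⟨AffineSubspace.mem_map.2 ⟨y, hyL, rfl⟩, by simpa [mem_preimage, hpe'] using hyX⟩
  have hr : MapsTo p (L' ∩ p ⁻¹' X) (L ∩ X) := by
    rintro _ ⟨hyL', hyX⟩
    obtain ⟨y, hyL, rfl⟩ := AffineSubspace.mem_map.1 hyL'
    exact ⟨by simpa [hpe'] using hyL, hyX⟩
  have hι : MapsTo e X (p ⁻¹' X) := fun y hy => by simpa [mem_preimage, hpe'] using hy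
  refine (h L' hL' hdim').of_retract (mapsToHom e hj) (mapsToHom p hr) (mapsToHom e hι) ?_ rfl
  exact TopCat.ext fun y => Subtype.ext (hpe' y.1)

noncomputable def dropFirst (m n : ℕ) :
    EuclideanSpace ℝ (Fin (m + n)) →ₗ[ℝ] EuclideanSpace ℝ (Fin n) where
  toFun y := WithLp.toLp 2 (fun j => y (Fin.natAdd m j))
  map_add' _ _ := rfl
  map_smul' _ _ := rfl

theorem dropFirst_surjective (m n : ℕ) : Function.Surjective (dropFirst m n) := fun x =>
  ⟨WithLp.toLp 2 (Fin.append 0 x), by ext j; exact Fin.append_right _ _ j⟩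

theorem prodRm_eq_preimage (m n : ℕ) (S : Set (EuclideanSpace ℝ (Fin n))) :
    prodRm m n S = dropFirst m n ⁻¹' S :=
  rfl

theorem not_globallyConvex_prod_general
    (n m q : ℕ) (F : Set (EuclideanSpace ℝ (Fin n)))
    (h : ¬ GloballyConvex n q Fᶜ) :
    ¬ GloballyConvex (m + n) q (prodRm m n F)ᶜ := by
  intro hprod
  rw [prodRm_eq_preimage, ← preimage_compl] at hprod
  exact h (hprod.of_preimage (dropFirst m n) (dropFirst_surjective m n))

/-- If `F ⊆ ℝⁿ` is closed and `ℝⁿ ∖ F` is not globally `q`-convex, then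
`ℝ^{m+n} ∖ (ℝᵐ × F)` is not globally `q`-convex. -/
theorem not_globallyConvex_prod
    (n m q : ℕ) (hm : 1 ≤ m) (F : Set (EuclideanSpace ℝ (Fin n))) (hF : IsClosed F)
    (h : ¬ GloballyConvex n q Fᶜ) :
    ¬ GloballyConvex (m + n) q (prodRm m n F)ᶜ :=
  not_globallyConvex_prod_general n m q F h
end
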